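/- If a nonempty finite set o is a canonical form, then o \ {max o} is also a canonical form (or ⊥ if the result is empty). -/

import Mathlib

/-- Objects built inductively from atoms by finite tuples and finite sets
(a set node carries the list of its elements). -/
inductive Obj (A : Type) : Type
  | atom : A → Obj A
  | tup  : List (Obj A) → Obj A
  | sett : List (Obj A) → Obj A

/-- Applying a map on atoms to an object, recursively. -/
def Obj.applyPerm {A : Type} (π : A → A) : Obj A → Obj A
  | .atom a => .atom (π a)
  | .tup l => .tup (l.attach.map (fun o => Obj.applyPerm π o.1))
  | .sett l => .sett (l.attach.map (fun o => Obj.applyPerm π o.1))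
decreasing_by all_goals (have := List.sizeOf_lt_of_mem o.2; simp at this ⊢; omega)

/-- The list of atoms occurring in an object. -/
def Obj.atomsList {A : Type} : Obj A → List A
  | .atom a => [a]
  | .tup l => l.attach.flatMap (fun o => Obj.atomsList o.1)
  | .sett l => l.attach.flatMap (fun o => Obj.atomsList o.1)
decreasing_by all_goals (have := List.sizeOf_lt_of_mem o.2; simp at this ⊢; omega)

/-- The set of atoms occurring in an object. -/
def Obj.atoms {A : Type} (o : Obj A) : Set A := {a | a ∈ o.atomsList}

/-- Well-formed objects: the element lists of set nodes are strictly sorted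
(so they faithfully represent finite sets, listed in increasing order). -/
def Obj.WF {A : Type} [LinearOrder (Obj A)] : Obj A → Prop
  | .atom _ => True
  | .tup l => ∀ o ∈ l, Obj.WF o
  | .sett l => l.Pairwise (· < ·) ∧ ∀ o ∈ l, Obj.WF o

/-- Applying a map on atoms to an object, recursively; the element list of a
set node is re-sorted, so that set nodes keep representing sets. -/
def Obj.applyPermS {A : Type} [LinearOrder (Obj A)] (π : A → A) : Obj A → Obj A
  | .atom a => .atom (π a)
  | .tup l => .tup (l.attach.map (fun o => Obj.applyPermS π o.1))
  | .sett l => .sett ((l.attach.map (fun o => Obj.applyPermS π o.1)).mergeSort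
      (fun a b => decide (a ≤ b)))
decreasing_by all_goals (have := List.sizeOf_lt_of_mem o.2; simp at this ⊢; omega)

/-! If `π` made `sett l` smaller, the re-sorted image `u` of `l` would be lexicographically
below `l`. The re-sorted image of `l ++ [x]` is a sorted permutation of `u ++ [π x]`, hence
lexicographically at most `u ++ [π x]`, which is already below `l ++ [x]` since `u` and `l` have
the same length. So `π` would make `sett (l ++ [x])` smaller too. Injectivity of `π` on
well-formed objects keeps the re-sorted images strictly sorted, which is what the comparison of
set nodes requires. -/

namespace List

variable {α : Type*} [LinearOrder α]

theorem pairwise_lt_mergeSort {l : List α} (hl : l.Nodup) :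
    (l.mergeSort (fun a b => decide (a ≤ b))).Pairwise (· < ·) :=
  ((pairwise_mergeSort' (· ≤ ·) l).and ((mergeSort_perm _ _).nodup_iff.2 hl)).imp
    fun h => lt_of_le_of_ne h.1 h.2

theorem Lex.of_pairwise_le_of_perm_append {u l s t : List α} (h : Lex (· < ·) u l)
    (hlen : u.length = l.length) :
    ∀ {w : List α}, w.Pairwise (· ≤ ·) → w ~ u ++ s → Lex (· < ·) w (l ++ t) := by
  induction h with
  | nil => simp at hlen
  | @rel a u b l hab =>
    rintro (_ | ⟨c, w⟩) hw hp
    · exact .nil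
    · have hca : c ≤ a := hw.rel_head (hp.mem_iff.2 mem_cons_self)
      exact .rel (hca.trans_lt hab)
  | @cons a u l _ ih =>
    rintro (_ | ⟨c, w⟩) hw hp
    · exact .nil
    · have hca : c ≤ a := hw.rel_head (hp.mem_iff.2 mem_cons_self)
      obtain hca | rfl := hca.lt_or_eq
      · exact .rel hca
      · exact .cons (ih (by simpa using hlen) hw.of_cons hp.cons_inv)

end List

namespace Obj

variable {A : Type} [LinearOrder (Obj A)]

@[simp]
theorem applyPermS_sett (π : A → A) (l : List (Obj A)) :
    applyPermS π (sett l) =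
      sett ((l.map (applyPermS π)).mergeSort (fun a b => decide (a ≤ b))) := by
  rw [applyPermS, List.attach_map_val]

@[simp]
theorem applyPermS_tup (π : A → A) (l : List (Obj A)) :
    applyPermS π (tup l) = tup (l.map (applyPermS π)) := by
  rw [applyPermS, List.attach_map_val]

theorem applyPermS_applyPermS_of_leftInverse {σ π : A → A} (h : Function.LeftInverse σ π) :
    ∀ o : Obj A, o.WF → applyPermS σ (applyPermS π o) = o
  | .atom a, _ => by simp [applyPermS, h a]
  | .tup l, hwf => by
    rw [WF] at hwf
    rw [applyPermS_tup, applyPermS_tup, List.map_map]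
    exact congrArg tup <| List.map_congr_left (fun o ho =>
      applyPermS_applyPermS_of_leftInverse h o (hwf o ho)) |>.trans l.map_id
  | .sett l, hwf => by
    rw [WF] at hwf
    have hmap : (l.map (applyPermS π)).map (applyPermS σ) = l := by
      rw [List.map_map]
      exact List.map_congr_left (fun o ho =>
        applyPermS_applyPermS_of_leftInverse h o (hwf.2 o ho)) |>.trans l.map_id
    rw [applyPermS_sett, applyPermS_sett]
    refine congrArg sett <| List.Perm.eq_of_pairwise' (List.pairwise_mergeSort' (· ≤ ·) _)
      (hwf.1.imp le_of_lt) ?_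
    exact (List.mergeSort_perm _ _).trans <| ((List.mergeSort_perm _ _).map _).trans (.of_eq hmap)
decreasing_by all_goals (have := List.sizeOf_lt_of_mem ho; simp at this ⊢; omega)

theorem injOn_applyPermS (π : Equiv.Perm A) : Set.InjOn (applyPermS π) {o | o.WF} :=
  fun a ha b hb hab => by
    rw [← applyPermS_applyPermS_of_leftInverse π.symm_apply_apply a ha,
      ← applyPermS_applyPermS_of_leftInverse π.symm_apply_apply b hb, hab]

end Obj

theorem parent_of_canonical_set_general {A : Type} [LinearOrder (Obj A)]
    (hsett : ∀ l₁ l₂ : List (Obj A), l₁.Pairwise (· < ·) → l₂.Pairwise (· < ·) →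
        (Obj.sett l₁ < Obj.sett l₂ ↔ List.Lex (· < ·) l₁ l₂))
    (uset : A → Set A)
    (l : List (Obj A)) (x : Obj A) (hwf : (Obj.sett (l ++ [x])).WF)
    (hcan : ∀ π : Equiv.Perm A, (∀ a, π a ∈ uset a) →
      Obj.sett (l ++ [x]) ≤ (Obj.sett (l ++ [x])).applyPermS π) :
    ∀ π : Equiv.Perm A, (∀ a, π a ∈ uset a) →
      Obj.sett l ≤ (Obj.sett l).applyPermS π := by
  intro π hπ
  rw [Obj.WF] at hwf
  obtain ⟨hsorted, hwf⟩ := hwf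
  have hl : l.Pairwise (· < ·) := hsorted.sublist (List.sublist_append_left l [x])
  have himage : ∀ k ⊆ l ++ [x], k.Nodup →
      ((k.map (Obj.applyPermS π)).mergeSort (fun a b => decide (a ≤ b))).Pairwise (· < ·) :=
    fun k hk hnd => List.pairwise_lt_mergeSort <|
      hnd.map_on fun a ha b hb => Obj.injOn_applyPermS π (hwf a (hk ha)) (hwf b (hk hb))
  by_contra! hlt
  rw [Obj.applyPermS_sett] at hlt
  have hlex := (hsett _ _ (himage l (List.subset_append_left _ _) hl.nodup) hl).1 hlt
  refine (hcan π hπ).not_gt ?_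
  rw [Obj.applyPermS_sett, hsett _ _ (himage _ (List.Subset.refl _) hsorted.nodup) hsorted]
  refine hlex.of_pairwise_le_of_perm_append (s := [Obj.applyPermS π x]) (by simp)
    (List.pairwise_mergeSort' (· ≤ ·) _) ?_
  rw [List.map_append]
  exact (List.mergeSort_perm _ _).trans ((List.mergeSort_perm _ _).symm.append_right _)

/-- if a nonempty finite set (elements listed in increasing
order, so the last one is its maximum) is a canonical form, then the set
obtained by removing its maximum is too. -/
theorem parent_of_canonical_set {A : Type} [LinearOrder A] [LinearOrder (Obj A)] [WellFoundedLT (Obj A)]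
    (hatom : ∀ a b : A, Obj.atom a < Obj.atom b ↔ a < b)
    (htup : ∀ l₁ l₂ : List (Obj A), l₁.length = l₂.length →
        (Obj.tup l₁ < Obj.tup l₂ ↔ List.Lex (· < ·) l₁ l₂))
    (hsett : ∀ l₁ l₂ : List (Obj A), l₁.Pairwise (· < ·) → l₂.Pairwise (· < ·) →
        (Obj.sett l₁ < Obj.sett l₂ ↔ List.Lex (· < ·) l₁ l₂))
    (uset : A → Set A) (h1 : ∀ a, a ∈ uset a)
    (h2 : ∀ a b, uset a = uset b ∨ uset a ∩ uset b = ∅)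
    (l : List (Obj A)) (x : Obj A) (hwf : (Obj.sett (l ++ [x])).WF)
    (hcan : ∀ π : Equiv.Perm A, (∀ a, π a ∈ uset a) →
      Obj.sett (l ++ [x]) ≤ (Obj.sett (l ++ [x])).applyPermS π) :
    ∀ π : Equiv.Perm A, (∀ a, π a ∈ uset a) →
      Obj.sett l ≤ (Obj.sett l).applyPermS π :=
  parent_of_canonical_set_general hsett uset l x hwf hcan
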